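/- For every odd positive integer k, the iterated lowering operator satisfies Δ_{1/2−k} ∘ L_{3/2}^{(k+1)/2} = L_{3/2}^{(k+1)/2} ∘ (Δ_{3/2} + (k/4)(k+1)) on smooth functions on the upper half-plane. -/

import Mathlib

noncomputable section

/-- Partial derivative in the direction of the real axis (`∂/∂u`). -/
def du (f : ℂ → ℂ) (z : ℂ) : ℂ := fderiv ℝ f z 1

/-- Partial derivative in the direction of the imaginary axis (`∂/∂v`). -/
def dv (f : ℂ → ℂ) (z : ℂ) : ℂ := fderiv ℝ f z Complex.I

/-- The weight `k` hyperbolic Laplace operator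
`Δ_k = -v^2 (∂_u^2 + ∂_v^2) + i k v (∂_u + i ∂_v)`. -/
def hypLaplacian (k : ℝ) (f : ℂ → ℂ) (z : ℂ) : ℂ :=
  -(z.im : ℂ) ^ 2 * (du (du f) z + dv (dv f) z)
    + Complex.I * (k : ℂ) * (z.im : ℂ) * (du f z + Complex.I * dv f z)

/-- The weight `k` Maass raising operator `R_k = 2i ∂/∂τ + k v⁻¹`,
where `2i ∂/∂τ = i ∂_u + ∂_v`. -/
def raiseOp (k : ℝ) (f : ℂ → ℂ) (z : ℂ) : ℂ :=
  Complex.I * du f z + dv f z + (k : ℂ) / (z.im : ℂ) * f z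


/-- The weight `k` Maass lowering operator `L_k = -2i v^2 ∂/∂τ̄`,
where `2 ∂/∂τ̄ = ∂_u + i ∂_v`.  (The formula does not depend on `k`.) -/
def lowerOp (f : ℂ → ℂ) (z : ℂ) : ℂ :=
  -Complex.I * (z.im : ℂ) ^ 2 * (du f z + Complex.I * dv f z)

/-- The iterated lowering operator `L_k^n = L_{k-2(n-1)} ∘ ⋯ ∘ L_{k-2} ∘ L_k`,
with `L_k^0 = id`.  (The lowering operator does not depend on the weight.) -/
def lowerIter : ℕ → (ℂ → ℂ) → ℂ → ℂ
  | 0, f => f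
  | n + 1, f => lowerOp (lowerIter n f)

def Vc : ℂ →L[ℝ] ℂ := Complex.ofRealCLM.comp Complex.imCLM

lemma Vc_apply (w : ℂ) : Vc w = (w.im : ℂ) := rfl

lemma contDiff_V : ContDiff ℝ (⊤ : ℕ∞) (fun w : ℂ => (w.im : ℂ)) := Vc.contDiff

lemma du_V (z : ℂ) : du (fun w : ℂ => (w.im : ℂ)) z = 0 := by
  have : du (fun w : ℂ => (w.im : ℂ)) z = Vc 1 := by
    simp [du, show (fun w : ℂ => (w.im : ℂ)) = Vc from rfl, Vc.fderiv]
  simp [this, Vc_apply]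

lemma dv_V (z : ℂ) : dv (fun w : ℂ => (w.im : ℂ)) z = 1 := by
  have : dv (fun w : ℂ => (w.im : ℂ)) z = Vc Complex.I := by
    simp [dv, show (fun w : ℂ => (w.im : ℂ)) = Vc from rfl, Vc.fderiv]
  simp [this, Vc_apply]

lemma du_add {f g : ℂ → ℂ} {z : ℂ} (hf : DifferentiableAt ℝ f z)
    (hg : DifferentiableAt ℝ g z) :
    du (fun w => f w + g w) z = du f z + du g z := by
  simp [du, fderiv_fun_add hf hg]

lemma dv_add {f g : ℂ → ℂ} {z : ℂ} (hf : DifferentiableAt ℝ f z)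
    (hg : DifferentiableAt ℝ g z) :
    dv (fun w => f w + g w) z = dv f z + dv g z := by
  simp [dv, fderiv_fun_add hf hg]

lemma du_mul {f g : ℂ → ℂ} {z : ℂ} (hf : DifferentiableAt ℝ f z)
    (hg : DifferentiableAt ℝ g z) :
    du (fun w => f w * g w) z = du f z * g z + f z * du g z := by
  simp [du, fderiv_fun_mul hf hg]; ring

lemma dv_mul {f g : ℂ → ℂ} {z : ℂ} (hf : DifferentiableAt ℝ f z)
    (hg : DifferentiableAt ℝ g z) :
    dv (fun w => f w * g w) z = dv f z * g z + f z * dv g z := by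
  simp [dv, fderiv_fun_mul hf hg]; ring

lemma du_const_mul {f : ℂ → ℂ} {z : ℂ} (c : ℂ) (hf : DifferentiableAt ℝ f z) :
    du (fun w => c * f w) z = c * du f z := by
  simp [du, fderiv_const_mul hf]

lemma dv_const_mul {f : ℂ → ℂ} {z : ℂ} (c : ℂ) (hf : DifferentiableAt ℝ f z) :
    dv (fun w => c * f w) z = c * dv f z := by
  simp [dv, fderiv_const_mul hf]

lemma contDiff_du {f : ℂ → ℂ} (hf : ContDiff ℝ (⊤ : ℕ∞) f) : ContDiff ℝ (⊤ : ℕ∞) (du f) :=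
  (hf.fderiv_right (by simp)).clm_apply contDiff_const

lemma contDiff_dv {f : ℂ → ℂ} (hf : ContDiff ℝ (⊤ : ℕ∞) f) : ContDiff ℝ (⊤ : ℕ∞) (dv f) :=
  (hf.fderiv_right (by simp)).clm_apply contDiff_const

lemma clairaut {f : ℂ → ℂ} (hf : ContDiff ℝ (⊤ : ℕ∞) f) : dv (du f) = du (dv f) := by
  funext z
  have hs : IsSymmSndFDerivAt ℝ f z :=
    hf.contDiffAt.isSymmSndFDerivAt (by rw [minSmoothness_of_isRCLikeNormedField, ← WithTop.coe_ofNat]; exact WithTop.coe_le_coe.mpr le_top)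
  have h1 : du f = fun w => (fderiv ℝ f w) 1 := rfl
  have h2 : dv f = fun w => (fderiv ℝ f w) Complex.I := rfl
  have hd : DifferentiableAt ℝ (fderiv ℝ f) z :=
    ((hf.fderiv_right (m := 1) (by rw [one_add_one_eq_two, ← WithTop.coe_ofNat]; exact WithTop.coe_le_coe.mpr le_top)).differentiable one_ne_zero).differentiableAt
  rw [dv, du, h1, h2,
    fderiv_clm_apply hd (differentiableAt_const _),
    fderiv_clm_apply hd (differentiableAt_const _)]
  simp [hs Complex.I 1]

lemma diffAt {g : ℂ → ℂ} (hg : ContDiff ℝ (⊤ : ℕ∞) g) (z : ℂ) : DifferentiableAt ℝ g z :=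
  (hg.differentiable (by simp)).differentiableAt

lemma du_VMul {g : ℂ → ℂ} (hg : ContDiff ℝ (⊤ : ℕ∞) g) (z : ℂ) :
    du (fun w => (w.im : ℂ) * g w) z = (z.im : ℂ) * du g z := by
  rw [du_mul (diffAt contDiff_V z) (diffAt hg z), du_V]; ring

lemma dv_VMul {g : ℂ → ℂ} (hg : ContDiff ℝ (⊤ : ℕ∞) g) (z : ℂ) :
    dv (fun w => (w.im : ℂ) * g w) z = g z + (z.im : ℂ) * dv g z := by
  rw [dv_mul (diffAt contDiff_V z) (diffAt hg z), dv_V]; ring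

lemma contDiff_VMul {g : ℂ → ℂ} (hg : ContDiff ℝ (⊤ : ℕ∞) g) :
    ContDiff ℝ (⊤ : ℕ∞) (fun w => (w.im : ℂ) * g w) := contDiff_V.mul hg

lemma du_VsqMul {g : ℂ → ℂ} (hg : ContDiff ℝ (⊤ : ℕ∞) g) (z : ℂ) :
    du (fun w => (w.im : ℂ) ^ 2 * g w) z = (z.im : ℂ) ^ 2 * du g z := by
  have h : (fun w : ℂ => (w.im : ℂ) ^ 2 * g w)
      = fun w : ℂ => (w.im : ℂ) * ((w.im : ℂ) * g w) := by funext w; ring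
  rw [h, du_VMul (contDiff_VMul hg), du_VMul hg]; ring

lemma dv_VsqMul {g : ℂ → ℂ} (hg : ContDiff ℝ (⊤ : ℕ∞) g) (z : ℂ) :
    dv (fun w => (w.im : ℂ) ^ 2 * g w) z
      = 2 * (z.im : ℂ) * g z + (z.im : ℂ) ^ 2 * dv g z := by
  have h : (fun w : ℂ => (w.im : ℂ) ^ 2 * g w)
      = fun w : ℂ => (w.im : ℂ) * ((w.im : ℂ) * g w) := by funext w; ring
  rw [h, dv_VMul (contDiff_VMul hg), dv_VMul hg]; ring

lemma contDiff_VsqMul {g : ℂ → ℂ} (hg : ContDiff ℝ (⊤ : ℕ∞) g) :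
    ContDiff ℝ (⊤ : ℕ∞) (fun w => (w.im : ℂ) ^ 2 * g w) := (contDiff_V.pow 2).mul hg

section
variable {f : ℂ → ℂ}

lemma contDiff_P (hf : ContDiff ℝ (⊤ : ℕ∞) f) :
    ContDiff ℝ (⊤ : ℕ∞) (fun w => du f w + Complex.I * dv f w) :=
  (contDiff_du hf).add (contDiff_const.mul (contDiff_dv hf))

lemma lowerOp_eq (f : ℂ → ℂ) :
    lowerOp f = fun w => -Complex.I *
      ((w.im : ℂ) ^ 2 * (du f w + Complex.I * dv f w)) := by
  funext w; simp [lowerOp]; ring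

lemma contDiff_lowerOp (hf : ContDiff ℝ (⊤ : ℕ∞) f) : ContDiff ℝ (⊤ : ℕ∞) (lowerOp f) := by
  rw [lowerOp_eq]
  exact contDiff_const.mul (contDiff_VsqMul (contDiff_P hf))

lemma du_lowerOp (hf : ContDiff ℝ (⊤ : ℕ∞) f) :
    du (lowerOp f) = fun w => -Complex.I * ((w.im : ℂ) ^ 2 *
      (du (du f) w + Complex.I * du (dv f) w)) := by
  funext w
  rw [lowerOp_eq, du_const_mul _ (diffAt (contDiff_VsqMul (contDiff_P hf)) w),
    du_VsqMul (contDiff_P hf),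
    du_add (diffAt (contDiff_du hf) w) (diffAt (contDiff_const.mul (contDiff_dv hf)) w),
    du_const_mul _ (diffAt (contDiff_dv hf) w)]

lemma dv_lowerOp (hf : ContDiff ℝ (⊤ : ℕ∞) f) :
    dv (lowerOp f) = fun w => -Complex.I *
      (2 * (w.im : ℂ) * (du f w + Complex.I * dv f w)
        + (w.im : ℂ) ^ 2 * (dv (du f) w + Complex.I * dv (dv f) w)) := by
  funext w
  rw [lowerOp_eq, dv_const_mul _ (diffAt (contDiff_VsqMul (contDiff_P hf)) w),
    dv_VsqMul (contDiff_P hf),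
    dv_add (diffAt (contDiff_du hf) w) (diffAt (contDiff_const.mul (contDiff_dv hf)) w),
    dv_const_mul _ (diffAt (contDiff_dv hf) w)]

end

lemma du_neg {f : ℂ → ℂ} {z : ℂ} : du (fun w => -f w) z = -du f z := by
  simp [du, fderiv_neg]

lemma dv_neg {f : ℂ → ℂ} {z : ℂ} : dv (fun w => -f w) z = -dv f z := by
  simp [dv, fderiv_neg]

section
variable {f : ℂ → ℂ}

lemma contDiff_S (hf : ContDiff ℝ (⊤ : ℕ∞) f) :
    ContDiff ℝ (⊤ : ℕ∞) (fun w => du (du f) w + dv (dv f) w) :=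
  (contDiff_du (contDiff_du hf)).add (contDiff_dv (contDiff_dv hf))

lemma hypLaplacian_eq (κ : ℝ) (f : ℂ → ℂ) :
    hypLaplacian κ f = fun w => -((w.im : ℂ) ^ 2 * (du (du f) w + dv (dv f) w))
      + (Complex.I * κ) * ((w.im : ℂ) * (du f w + Complex.I * dv f w)) := by
  funext w; simp [hypLaplacian]; ring

lemma contDiff_hyp (κ : ℝ) (hf : ContDiff ℝ (⊤ : ℕ∞) f) : ContDiff ℝ (⊤ : ℕ∞) (hypLaplacian κ f) := by
  rw [hypLaplacian_eq]
  exact (contDiff_VsqMul (contDiff_S hf)).neg.add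
    (contDiff_const.mul (contDiff_VMul (contDiff_P hf)))

lemma du_hyp (κ : ℝ) (hf : ContDiff ℝ (⊤ : ℕ∞) f) (z : ℂ) :
    du (hypLaplacian κ f) z
      = -((z.im : ℂ) ^ 2 * (du (du (du f)) z + du (dv (dv f)) z))
        + (Complex.I * κ) * ((z.im : ℂ) * (du (du f) z + Complex.I * du (dv f) z)) := by
  rw [hypLaplacian_eq,
    du_add ((diffAt (contDiff_VsqMul (contDiff_S hf)) z).fun_neg)
      (diffAt (contDiff_const.mul (contDiff_VMul (contDiff_P hf))) z),
    du_neg, du_VsqMul (contDiff_S hf),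
    du_const_mul _ (diffAt (contDiff_VMul (contDiff_P hf)) z),
    du_VMul (contDiff_P hf),
    du_add (diffAt (contDiff_du (contDiff_du hf)) z) (diffAt (contDiff_dv (contDiff_dv hf)) z),
    du_add (diffAt (contDiff_du hf) z) (diffAt (contDiff_const.mul (contDiff_dv hf)) z),
    du_const_mul _ (diffAt (contDiff_dv hf) z)]

lemma dv_hyp (κ : ℝ) (hf : ContDiff ℝ (⊤ : ℕ∞) f) (z : ℂ) :
    dv (hypLaplacian κ f) z
      = -(2 * (z.im : ℂ) * (du (du f) z + dv (dv f) z)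
          + (z.im : ℂ) ^ 2 * (dv (du (du f)) z + dv (dv (dv f)) z))
        + (Complex.I * κ) * ((du f z + Complex.I * dv f z)
          + (z.im : ℂ) * (dv (du f) z + Complex.I * dv (dv f) z)) := by
  rw [hypLaplacian_eq,
    dv_add ((diffAt (contDiff_VsqMul (contDiff_S hf)) z).fun_neg)
      (diffAt (contDiff_const.mul (contDiff_VMul (contDiff_P hf))) z),
    dv_neg, dv_VsqMul (contDiff_S hf),
    dv_const_mul _ (diffAt (contDiff_VMul (contDiff_P hf)) z),
    dv_VMul (contDiff_P hf),
    dv_add (diffAt (contDiff_du (contDiff_du hf)) z) (diffAt (contDiff_dv (contDiff_dv hf)) z),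
    dv_add (diffAt (contDiff_du hf) z) (diffAt (contDiff_const.mul (contDiff_dv hf)) z),
    dv_const_mul _ (diffAt (contDiff_dv hf) z)]

end

section
variable {f : ℂ → ℂ}

lemma dudu_lowerOp (hf : ContDiff ℝ (⊤ : ℕ∞) f) (z : ℂ) :
    du (du (lowerOp f)) z = -Complex.I * ((z.im : ℂ) ^ 2 *
      (du (du (du f)) z + Complex.I * du (du (dv f)) z)) := by
  rw [du_lowerOp hf]
  have hQ : ContDiff ℝ (⊤ : ℕ∞) (fun w => du (du f) w + Complex.I * du (dv f) w) :=
    (contDiff_du (contDiff_du hf)).add (contDiff_const.mul (contDiff_du (contDiff_dv hf)))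
  rw [du_const_mul _ (diffAt (contDiff_VsqMul hQ) z), du_VsqMul hQ,
    du_add (diffAt (contDiff_du (contDiff_du hf)) z)
      (diffAt (contDiff_const.mul (contDiff_du (contDiff_dv hf))) z),
    du_const_mul _ (diffAt (contDiff_du (contDiff_dv hf)) z)]

lemma dvdv_lowerOp (hf : ContDiff ℝ (⊤ : ℕ∞) f) (z : ℂ) :
    dv (dv (lowerOp f)) z
      = (-2 * Complex.I) * ((du f z + Complex.I * dv f z)
          + (z.im : ℂ) * (dv (du f) z + Complex.I * dv (dv f) z))
        + -Complex.I * (2 * (z.im : ℂ) * (dv (du f) z + Complex.I * dv (dv f) z)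
          + (z.im : ℂ) ^ 2 * (dv (dv (du f)) z + Complex.I * dv (dv (dv f)) z)) := by
  have hR : ContDiff ℝ (⊤ : ℕ∞) (fun w => dv (du f) w + Complex.I * dv (dv f) w) :=
    (contDiff_dv (contDiff_du hf)).add (contDiff_const.mul (contDiff_dv (contDiff_dv hf)))
  have h2 : dv (lowerOp f) = fun w =>
      (-2 * Complex.I) * ((w.im : ℂ) * (du f w + Complex.I * dv f w))
      + -Complex.I * ((w.im : ℂ) ^ 2 * (dv (du f) w + Complex.I * dv (dv f) w)) := by
    rw [dv_lowerOp hf]; funext w; ring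
  rw [h2,
    dv_add (diffAt (contDiff_const.mul (contDiff_VMul (contDiff_P hf))) z)
      (diffAt (contDiff_const.mul (contDiff_VsqMul hR)) z),
    dv_const_mul _ (diffAt (contDiff_VMul (contDiff_P hf)) z),
    dv_VMul (contDiff_P hf),
    dv_const_mul _ (diffAt (contDiff_VsqMul hR) z),
    dv_VsqMul hR,
    dv_add (diffAt (contDiff_du hf) z) (diffAt (contDiff_const.mul (contDiff_dv hf)) z),
    dv_const_mul _ (diffAt (contDiff_dv hf) z),
    dv_add (diffAt (contDiff_dv (contDiff_du hf)) z)
      (diffAt (contDiff_const.mul (contDiff_dv (contDiff_dv hf))) z),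
    dv_const_mul _ (diffAt (contDiff_dv (contDiff_dv hf)) z)]

lemma step (κ : ℝ) (hf : ContDiff ℝ (⊤ : ℕ∞) f) (z : ℂ) :
    hypLaplacian (κ - 2) (lowerOp f) z
      = lowerOp (fun w => hypLaplacian κ f w + (2 - (κ : ℂ)) * f w) z := by
  have hH : DifferentiableAt ℝ (hypLaplacian κ f) z := diffAt (contDiff_hyp κ hf) z
  have hLf := contDiff_lowerOp hf
  -- expand RHS
  rw [lowerOp,
    du_add hH (diffAt (contDiff_const.mul hf) z),
    dv_add hH (diffAt (contDiff_const.mul hf) z),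
    du_const_mul _ (diffAt hf z), dv_const_mul _ (diffAt hf z),
    du_hyp κ hf, dv_hyp κ hf]
  -- expand LHS
  rw [hypLaplacian, dudu_lowerOp hf, dvdv_lowerOp hf, du_lowerOp hf, dv_lowerOp hf]
  -- normalize mixed partials
  simp only [clairaut hf, clairaut (contDiff_du hf), clairaut (contDiff_dv hf)]
  push_cast
  ring_nf
  simp only [show Complex.I ^ 2 = -1 from Complex.I_sq,
    show Complex.I ^ 3 = -Complex.I by rw [pow_succ, Complex.I_sq]; ring,
    show Complex.I ^ 4 = 1 by rw [show (4:ℕ)=2*2 from rfl, pow_mul, Complex.I_sq]; ring]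
  ring

end

lemma contDiff_lowerIter (n : ℕ) {f : ℂ → ℂ} (hf : ContDiff ℝ (⊤ : ℕ∞) f) :
    ContDiff ℝ (⊤ : ℕ∞) (lowerIter n f) := by
  induction n with
  | zero => exact hf
  | succ n ih => exact contDiff_lowerOp ih

lemma lowerOp_add_smul {g h : ℂ → ℂ} (hg : ContDiff ℝ (⊤ : ℕ∞) g) (hh : ContDiff ℝ (⊤ : ℕ∞) h)
    (a : ℂ) (z : ℂ) :
    lowerOp (fun w => g w + a * h w) z = lowerOp g z + a * lowerOp h z := by
  rw [lowerOp, lowerOp, lowerOp,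
    du_add (diffAt hg z) (diffAt (contDiff_const.mul hh) z),
    dv_add (diffAt hg z) (diffAt (contDiff_const.mul hh) z),
    du_const_mul _ (diffAt hh z), dv_const_mul _ (diffAt hh z)]
  ring

lemma lowerIter_add_smul (n : ℕ) {g h : ℂ → ℂ} (hg : ContDiff ℝ (⊤ : ℕ∞) g)
    (hh : ContDiff ℝ (⊤ : ℕ∞) h) (a : ℂ) :
    lowerIter n (fun w => g w + a * h w)
      = fun z => lowerIter n g z + a * lowerIter n h z := by
  induction n with
  | zero => rfl
  | succ n ih =>
    show lowerOp (lowerIter n fun w => g w + a * h w) = _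
    rw [ih]
    funext z
    exact lowerOp_add_smul (contDiff_lowerIter n hg) (contDiff_lowerIter n hh) a z

lemma main (n : ℕ) {f : ℂ → ℂ} (hf : ContDiff ℝ (⊤ : ℕ∞) f) :
    hypLaplacian (3/2 - 2*n) (lowerIter n f)
      = lowerIter n (fun w => hypLaplacian (3/2) f w + ((n:ℂ)^2 - (n:ℂ)/2) * f w) := by
  induction n with
  | zero =>
    funext z
    norm_num [lowerIter]
  | succ n ih =>
    have hG : ContDiff ℝ (⊤ : ℕ∞) (fun w => hypLaplacian (3/2) f w + ((n:ℂ)^2 - (n:ℂ)/2) * f w) :=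
      (contDiff_hyp _ hf).add (contDiff_const.mul hf)
    have hκ : (3/2 - 2*((n+1:ℕ)):ℝ) = (3/2 - 2*(n:ℕ)) - 2 := by push_cast; ring
    funext z
    rw [show lowerIter (n+1) f = lowerOp (lowerIter n f) from rfl, hκ,
      step _ (contDiff_lowerIter n hf) z]
    have h1 : (fun w => hypLaplacian (3/2 - 2*(n:ℕ)) (lowerIter n f) w
          + (2 - (((3/2 - 2*(n:ℕ) : ℝ)):ℂ)) * lowerIter n f w)
        = lowerIter n (fun w => (hypLaplacian (3/2) f w + ((n:ℂ)^2 - (n:ℂ)/2) * f w)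
            + ((1/2 : ℂ) + 2*n) * f w) := by
      rw [lowerIter_add_smul n hG hf ((1/2 : ℂ) + 2*n)]
      funext w
      rw [ih]
      push_cast
      ring
    rw [h1]
    have h2 : (fun w => (hypLaplacian (3/2) f w + ((n:ℂ)^2 - (n:ℂ)/2) * f w)
          + ((1/2 : ℂ) + 2*n) * f w)
        = fun w => hypLaplacian (3/2) f w + (((n+1:ℕ):ℂ)^2 - ((n+1:ℕ):ℂ)/2) * f w := by
      funext w; push_cast; ring
    rw [h2]
    rfl

/-- For odd positive `k`,
`Δ_{1/2-k} ∘ L_{3/2}^{(k+1)/2} = L_{3/2}^{(k+1)/2} ∘ (Δ_{3/2} + (k/4)(k+1))`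
on smooth functions on the upper half-plane. -/
theorem laplacian_lowerIter_half_commutation (k : ℕ) (hk : 0 < k) (hko : Odd k)
    (f : ℂ → ℂ) (hf : ContDiff ℝ (⊤ : ℕ∞) f) (z : ℂ) (hz : 0 < z.im) :
    hypLaplacian (1 / 2 - (k : ℝ)) (lowerIter ((k + 1) / 2) f) z
      = lowerIter ((k + 1) / 2)
          (fun w => hypLaplacian (3 / 2) f w + (k : ℂ) / 4 * ((k : ℂ) + 1) * f w) z := by
  obtain ⟨m, hm⟩ := hko
  have hn : (k + 1) / 2 = m + 1 := by omega
  have hw : (1 / 2 - (k : ℝ)) = 3/2 - 2*((m+1:ℕ)) := by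
    push_cast [hm]; ring
  have hc : (fun w => hypLaplacian (3 / 2) f w + (k : ℂ) / 4 * ((k : ℂ) + 1) * f w)
      = fun w => hypLaplacian (3/2) f w + (((m+1:ℕ):ℂ)^2 - ((m+1:ℕ):ℂ)/2) * f w := by
    funext w; push_cast [hm]; ring
  rw [hn, hw, hc, main (m+1) hf]
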